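/- arXiv:2306.09745 — 4 statements merged into one kernel-verified Lean document; each statement's English description precedes it below -/
import Mathlib

section
/- Let F : C → D be an exact, fully faithful, k-linear functor between k-linear abelian categories in which every object has finite length. Then the following are equivalent: (i) F sends simple objects to simple objects; (ii) for every object X of C, every subobject of F(X) is the image of F(Y) → F(X) for some subobject Y of X. -/
open CategoryTheory CategoryTheory.Limits

universe v₁ u₁ v₂ u₂

/-- `W` is a subquotient of `Z`: a quotient of a subobject of `Z`. -/
def IsSubquotient {C : Type u₁} [Category.{v₁} C] (W Z : C) : Prop :=
  ∃ (S : C) (i : S ⟶ Z) (p : S ⟶ W), Mono i ∧ Epi p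

/-!
Induct on `X` along proper quotients; this is well founded because `X` is Noetherian: the kernel
of `X ↠ X'` grows strictly as `X'` passes to a proper quotient. For `X ≠ 0` pick a simple
subobject `S ↪ X` (`X` is Artinian) with quotient `g : X ↠ Q`, and let `Z ↪ F X`. As `F S` is
simple, either `Z ∩ F S = 0` or `F S ⊆ Z`. In the first case `Z` embeds into `F Q`, so `Z ≅ F Y`
for some `Y`, and `F Y ≅ Z ↪ F X` comes from a mono `Y ↪ X` because `F` is fully faithful. In
the second case `Z` is the preimage of its image in `F Q`; that image is `F Y'` for some
`Y' ↪ Q`, and since `F` preserves pullbacks, `Z ≅ F (g⁻¹ Y')`.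
Conversely, if `X` is simple, a nonzero subobject of `F X` is `F` of a nonzero, hence
invertible, mono into `X`.
-/

namespace CategoryTheory

section ProperQuotient

variable {C : Type u₁} [Category.{v₁} C] [Abelian C]

def IsProperQuotient (Q X : C) : Prop := ∃ q : X ⟶ Q, Epi q ∧ ¬ Mono q

lemma mono_of_kernelSubobject_comp_le {X Y Z : C} (p : X ⟶ Y) [Epi p] (q : Y ⟶ Z)
    (h : kernelSubobject (p ≫ q) ≤ kernelSubobject p) : Mono q := by
  refine Preadditive.mono_of_cancel_zero q fun {T} t ht => ?_
  obtain ⟨T', π, _, x, hx⟩ := surjective_up_to_refinements_of_epi p t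
  have hxpq : x ≫ p ≫ q = 0 := by rw [← Category.assoc, ← hx, Category.assoc, ht, comp_zero]
  have hxp : x ≫ p = 0 := (kernelSubobject_factors_iff p x).1
    (Subobject.factors_of_le x h ((kernelSubobject_factors_iff _ x).2 hxpq))
  rw [← cancel_epi π, hx, hxp, comp_zero]

lemma kernelSubobject_lt_kernelSubobject_comp {X Y Z : C} (p : X ⟶ Y) [Epi p] (q : Y ⟶ Z)
    (hq : ¬ Mono q) : kernelSubobject p < kernelSubobject (p ≫ q) :=
  (kernelSubobject_comp_le p q).lt_of_not_ge fun h => hq (mono_of_kernelSubobject_comp_le p q h)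

theorem wellFounded_isProperQuotient (hN : ∀ X : C, IsNoetherianObject X) :
    WellFounded (IsProperQuotient (C := C)) := by
  refine ⟨fun X => ?_⟩
  have := hN X
  suffices ∀ (K : Subobject X) (X' : C) (p : X ⟶ X'), Epi p → kernelSubobject p = K →
      Acc IsProperQuotient X' from this _ X (𝟙 X) inferInstance rfl
  intro K
  induction K using WellFoundedGT.induction with
  | _ K ih =>
  rintro X' p _ rfl
  exact ⟨_, fun X'' ⟨q, _, hq⟩ =>
    ih _ (kernelSubobject_lt_kernelSubobject_comp p q hq) X'' (p ≫ q) (epi_comp _ _) rfl⟩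

lemma isProperQuotient_cokernel {S X : C} (f : S ⟶ X) [Mono f] (hS : ¬ IsZero S) :
    IsProperQuotient (cokernel f) X :=
  ⟨cokernel.π f, inferInstance, fun _ =>
    hS (IsZero.of_mono_eq_zero f (zero_of_comp_mono _ (cokernel.condition f)))⟩

end ProperQuotient

section

variable {C : Type u₁} [Category.{v₁} C] [Abelian C]

lemma factors_or_mono_comp_of_simple {T A B Z : C} [Simple T] {s : T ⟶ A} {g : A ⟶ B}
    {w : s ≫ g = 0} (hex : (ShortComplex.mk s g w).Exact) [Mono s] (m : Z ⟶ A) [Mono m] :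
    (∃ φ : T ⟶ Z, φ ≫ m = s) ∨ Mono (m ≫ g) := by
  let c : kernel (m ≫ g) ⟶ T := hex.lift (kernel.ι (m ≫ g) ≫ m) (by simp)
  have hc : c ≫ s = kernel.ι (m ≫ g) ≫ m := hex.lift_f _ _
  have : Mono c := mono_of_mono_fac hc
  by_cases hc0 : c = 0
  · right
    exact Abelian.mono_of_kernel_ι_eq_zero _ (zero_of_comp_mono m (by rw [← hc, hc0, zero_comp]))
  · left
    have := isIso_of_mono_of_nonzero hc0
    exact ⟨inv c ≫ kernel.ι (m ≫ g), by rw [Category.assoc, ← hc, IsIso.inv_hom_id_assoc]⟩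

lemma isPullback_of_exact_of_factors {K Z A B I : C} {k : K ⟶ A} {g : A ⟶ B} {w : k ≫ g = 0}
    (hex : (ShortComplex.mk k g w).Exact) {m : Z ⟶ A} [Mono m] (φ : K ⟶ Z) (hφ : φ ≫ m = k)
    {e : Z ⟶ I} [Epi e] {ι : I ⟶ B} [Mono ι] (sq : m ≫ g = e ≫ ι) : IsPullback m e g ι := by
  let c : Z ⟶ pullback g ι := pullback.lift m e sq
  have hc₁ : c ≫ pullback.fst g ι = m := pullback.lift_fst _ _ _
  have hc₂ : c ≫ pullback.snd g ι = e := pullback.lift_snd _ _ _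
  have : Mono c := mono_of_mono_fac hc₁
  have : Epi c := by
    rw [epi_iff_surjective_up_to_refinements]
    intro T y
    -- Up to refinement, lift the second component of `y` along `e`; the resulting error in the
    -- first component lies in `ker g`, which factors through `m`.
    obtain ⟨T₁, π₁, _, z, hz⟩ := surjective_up_to_refinements_of_epi e (y ≫ pullback.snd g ι)
    obtain ⟨T₂, π₂, _, a, ha⟩ :=
      hex.exact_up_to_refinements (π₁ ≫ y ≫ pullback.fst g ι - z ≫ m) (by
        simp [sq, reassoc_of% hz, pullback.condition])
    refine ⟨T₂, π₂ ≫ π₁, epi_comp _ _, π₂ ≫ z + a ≫ φ, ?_⟩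
    have hfst : (π₂ ≫ π₁) ≫ y ≫ pullback.fst g ι = (π₂ ≫ z + a ≫ φ) ≫ m := by
      simp only [Preadditive.comp_sub] at ha
      simp [hφ, ← ha]
    apply pullback.hom_ext
    · simpa only [Category.assoc, hc₁] using hfst
    · rw [← cancel_mono ι]
      simp only [Category.assoc, hc₂, ← pullback.condition, ← sq]
      simpa only [Category.assoc] using hfst =≫ g
  have := isIso_of_mono_of_epi c
  exact IsPullback.of_iso_pullback ⟨sq⟩ (asIso c) hc₁ hc₂

end

namespace Functor

variable {C : Type u₁} [Category.{v₁} C] {D : Type u₂} [Category.{v₂} D] (F : C ⥤ D)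

def LiftsSubobject {X : C} {Z : D} (m : Z ⟶ F.obj X) : Prop :=
  ∃ (Y : C) (i : Y ⟶ X), Mono i ∧ ∃ e : F.obj Y ≅ Z, e.hom ≫ m = F.map i

def LiftsSubobjects (X : C) : Prop :=
  ∀ (Z : D) (m : Z ⟶ F.obj X), Mono m → F.LiftsSubobject m

lemma liftsSubobjects_of_isZero [HasZeroMorphisms C] [HasZeroMorphisms D]
    [F.PreservesZeroMorphisms] {X : C} (hX : IsZero X) : F.LiftsSubobjects X := by
  intro Z m _
  have hFX := F.map_isZero hX
  exact ⟨X, 𝟙 X, inferInstance, hFX.iso (hFX.of_mono m), hFX.eq_of_src _ _⟩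

variable {F}

lemma simple_obj_of_liftsSubobjects [HasZeroMorphisms C] [HasZeroMorphisms D]
    [F.PreservesZeroMorphisms] [F.Faithful] {X : C} [Simple X] (hX : F.LiftsSubobjects X) :
    Simple (F.obj X) where
  mono_isIso_iff_nonzero {Z} m _ := by
    constructor
    · rintro _ rfl
      have hFX : 𝟙 (F.obj X) = 0 := (IsZero.of_epi_eq_zero (0 : Z ⟶ F.obj X) rfl).eq_of_src _ _
      exact id_nonzero X (F.map_injective (by rw [F.map_id, hFX, F.map_zero]))
    · intro hm
      obtain ⟨Y, i, _, e, he⟩ := hX Z m inferInstance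
      have hi : i ≠ 0 := by
        rintro rfl
        exact hm ((cancel_epi e.hom).1 (by rw [he, F.map_zero, comp_zero]))
      have := isIso_of_mono_of_nonzero hi
      rw [← e.inv_hom_id_assoc m, he]
      infer_instance

lemma LiftsSubobject.of_mono_comp [F.Full] [F.Faithful] {X Q : C} (g : X ⟶ Q)
    (hQ : F.LiftsSubobjects Q) {Z : D} (m : Z ⟶ F.obj X) [Mono (m ≫ F.map g)] :
    F.LiftsSubobject m := by
  obtain ⟨Y, -, -, e, -⟩ := hQ Z (m ≫ F.map g) inferInstance
  have : Mono m := mono_of_mono m (F.map g)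
  have : Mono (F.map (F.preimage (e.hom ≫ m))) := by rw [F.map_preimage]; infer_instance
  exact ⟨Y, F.preimage (e.hom ≫ m), F.mono_of_mono_map this, e, (F.map_preimage _).symm⟩

variable [Abelian C] [Abelian D] [PreservesFiniteLimits F]

lemma LiftsSubobject.of_factors {S X Q : C} {f : S ⟶ X} [Mono f] {g : X ⟶ Q} {w : f ≫ g = 0}
    (hex : (ShortComplex.mk f g w).Exact) (hQ : F.LiftsSubobjects Q) {Z : D}
    (m : Z ⟶ F.obj X) [Mono m] (φ : F.obj S ⟶ Z) (hφ : φ ≫ m = F.map f) :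
    F.LiftsSubobject m := by
  obtain ⟨Y, i, _, e, he⟩ := hQ _ (Abelian.image.ι (m ≫ F.map g)) inferInstance
  have hsqD : IsPullback m (Abelian.factorThruImage (m ≫ F.map g) ≫ e.inv) (F.map g) (F.map i) :=
    isPullback_of_exact_of_factors (hex.map_of_mono_of_preservesKernel F ‹_› inferInstance)
      φ hφ (by simp [← he])
  have hsqC : IsPullback (F.map (pullback.fst g i)) (F.map (pullback.snd g i))
      (F.map g) (F.map i) :=
    F.map_isPullback (IsPullback.of_hasPullback g i)
  exact ⟨pullback g i, pullback.fst g i, inferInstance, hsqC.isoIsPullback _ _ hsqD,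
    hsqC.isoIsPullback_hom_fst _ _ hsqD⟩

variable [F.Full] [F.Faithful]

lemma liftsSubobjects_of_simple_subobject {S X : C} (f : S ⟶ X) [Mono f]
    [Simple (F.obj S)] (hQ : F.LiftsSubobjects (cokernel f)) : F.LiftsSubobjects X := by
  intro Z m _
  have hex := ShortComplex.exact_cokernel f
  rcases factors_or_mono_comp_of_simple
    (hex.map_of_mono_of_preservesKernel F ‹_› inferInstance) m with ⟨φ, hφ⟩ | _
  · exact .of_factors hex hQ m φ hφ
  · exact .of_mono_comp (cokernel.π f) hQ m

theorem liftsSubobjects_of_map_simple (hN : ∀ X : C, IsNoetherianObject X)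
    (hA : ∀ X : C, IsArtinianObject X) (hs : ∀ X : C, Simple X → Simple (F.obj X)) (X : C) :
    F.LiftsSubobjects X := by
  induction X using (wellFounded_isProperQuotient hN).induction with
  | _ X ih =>
  by_cases hX : IsZero X
  · exact F.liftsSubobjects_of_isZero hX
  · have := hA X
    have := hs _ (inferInstance : Simple (simpleSubobject hX))
    exact F.liftsSubobjects_of_simple_subobject (simpleSubobjectArrow hX)
      (ih _ (isProperQuotient_cokernel _ (Simple.not_isZero _)))

end Functor

end CategoryTheory

theorem simple_to_simple_iff_subobjects_lift_general
    {C : Type u₁} [Category.{v₁} C] [Abelian C]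
    {D : Type u₂} [Category.{v₂} D] [Abelian D]
    (hC : ∀ X : C, IsNoetherianObject X ∧ IsArtinianObject X)
    (F : C ⥤ D)
    [PreservesFiniteLimits F]
    [F.Full] [F.Faithful] :
    (∀ X : C, Simple X → Simple (F.obj X)) ↔
      (∀ (X : C) (Z : D) (m : Z ⟶ F.obj X), Mono m →
        ∃ (Y : C) (i : Y ⟶ X), Mono i ∧ ∃ e : F.obj Y ≅ Z, e.hom ≫ m = F.map i) :=
  ⟨F.liftsSubobjects_of_map_simple (fun X => (hC X).1) (fun X => (hC X).2),
    fun h X _ => F.simple_obj_of_liftsSubobjects (h X)⟩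

/-- Let `F : C ⥤ D` be an exact, fully faithful, `k`-linear functor between `k`-linear
abelian categories in which every object has finite length (Noetherian and Artinian).
Then `F` sends simple objects to simple objects if and only if every subobject of `F(X)`
is the image of `F(Y) ⟶ F(X)` for some subobject `Y ⊆ X`. -/
theorem simple_to_simple_iff_subobjects_lift
    {k : Type*} [Field k]
    {C : Type u₁} [Category.{v₁} C] [Abelian C] [Linear k C]
    {D : Type u₂} [Category.{v₂} D] [Abelian D] [Linear k D]
    (hC : ∀ X : C, IsNoetherianObject X ∧ IsArtinianObject X)
    (hD : ∀ X : D, IsNoetherianObject X ∧ IsArtinianObject X)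
    (F : C ⥤ D) [F.Additive] [F.Linear k]
    [PreservesFiniteLimits F] [PreservesFiniteColimits F]
    [F.Full] [F.Faithful] :
    (∀ X : C, Simple X → Simple (F.obj X)) ↔
      (∀ (X : C) (Z : D) (m : Z ⟶ F.obj X), Mono m →
        ∃ (Y : C) (i : Y ⟶ X), Mono i ∧ ∃ e : F.obj Y ≅ Z, e.hom ≫ m = F.map i) :=
  simple_to_simple_iff_subobjects_lift_general hC F
end

section
/- Let C₁, C₂, C₃, C₄ be abelian categories. Let F : C₁ → C₂ be an exact functor such that every object of C₂ is a subquotient of F(X) for some object X of C₁; let I : C₃ → C₄ be an exact, fully faithful functor whose essential image is closed under subquotients; and let G : C₁ → C₃ and H : C₂ → C₄ be exact functors equipped with a natural isomorphism F ⋙ H ≅ G ⋙ I. Then H factors through I: there exist a functor K : C₂ → C₃ and a natural isomorphism K ⋙ I ≅ H. -/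
open CategoryTheory CategoryTheory.Limits

universe v₁ u₁ v₂ u₂ v₃ u₃ v₄ u₄

theorem IsSubquotient.map {C : Type u₁} [Category.{v₁} C] {D : Type u₂} [Category.{v₂} D]
    (H : C ⥤ D) [H.PreservesMonomorphisms] [H.PreservesEpimorphisms] {W Z : C}
    (h : IsSubquotient W Z) : IsSubquotient (H.obj W) (H.obj Z) := by
  obtain ⟨S, i, p, _, _⟩ := h
  exact ⟨H.obj S, H.map i, H.map p, inferInstance, inferInstance⟩

theorem factors_through_subcategory_of_surjective_injective_square_general
    {C₁ : Type u₁} [Category.{v₁} C₁]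
    {C₂ : Type u₂} [Category.{v₂} C₂]
    {C₃ : Type u₃} [Category.{v₃} C₃]
    {C₄ : Type u₄} [Category.{v₄} C₄]
    (F : C₁ ⥤ C₂)
    (hF : ∀ Z : C₂, ∃ X : C₁, IsSubquotient Z (F.obj X))
    (I : C₃ ⥤ C₄) [I.Full] [I.Faithful]
    (hI : ∀ (Z W : C₄), IsSubquotient W Z → I.essImage Z → I.essImage W)
    (G : C₁ ⥤ C₃)
    (H : C₂ ⥤ C₄) [PreservesFiniteLimits H] [PreservesFiniteColimits H]
    (e : F ⋙ H ≅ G ⋙ I) :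
    ∃ K : C₂ ⥤ C₃, Nonempty (K ⋙ I ≅ H) := by
  have hH : ∀ Z : C₂, I.essImage (H.obj Z) := fun Z ↦ by
    obtain ⟨X, hX⟩ := hF Z
    exact hI _ _ (hX.map H) ⟨G.obj X, ⟨(e.app X).symm⟩⟩
  exact ⟨Functor.essImage.liftFunctor H I hH, ⟨Functor.essImage.liftFunctorCompIso H I hH⟩⟩

/-- Given abelian categories `C₁, C₂, C₃, C₄`, an exact functor `F : C₁ ⥤ C₂` such that every
object of `C₂` is a subquotient of some `F(X)`, an exact fully faithful functor `I : C₃ ⥤ C₄`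
whose essential image is closed under subquotients, and exact functors `G : C₁ ⥤ C₃`,
`H : C₂ ⥤ C₄` with a natural isomorphism `F ⋙ H ≅ G ⋙ I`, the functor `H` factors through
`I`: there is a functor `K : C₂ ⥤ C₃` with `K ⋙ I ≅ H`. -/
theorem factors_through_subcategory_of_surjective_injective_square
    {C₁ : Type u₁} [Category.{v₁} C₁] [Abelian C₁]
    {C₂ : Type u₂} [Category.{v₂} C₂] [Abelian C₂]
    {C₃ : Type u₃} [Category.{v₃} C₃] [Abelian C₃]
    {C₄ : Type u₄} [Category.{v₄} C₄] [Abelian C₄]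
    (F : C₁ ⥤ C₂) [PreservesFiniteLimits F] [PreservesFiniteColimits F]
    (hF : ∀ Z : C₂, ∃ X : C₁, IsSubquotient Z (F.obj X))
    (I : C₃ ⥤ C₄) [PreservesFiniteLimits I] [PreservesFiniteColimits I] [I.Full] [I.Faithful]
    (hI : ∀ (Z W : C₄), IsSubquotient W Z → I.essImage Z → I.essImage W)
    (G : C₁ ⥤ C₃) [PreservesFiniteLimits G] [PreservesFiniteColimits G]
    (H : C₂ ⥤ C₄) [PreservesFiniteLimits H] [PreservesFiniteColimits H]
    (e : F ⋙ H ≅ G ⋙ I) :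
    ∃ K : C₂ ⥤ C₃, Nonempty (K ⋙ I ≅ H) :=
  factors_through_subcategory_of_surjective_injective_square_general F hF I hI G H e
end

section
/- Let C be a pretannakian category over k and (A, μ, η) a commutative algebra object in C. Define the trace Tr : A → 1 as the composite A --(id_A ⊗ coev_A)--> A ⊗ A ⊗ A^∨ --(μ ⊗ id_{A^∨})--> A ⊗ A^∨ --(ev_A ∘ braiding_{A,A^∨})--> 1, and the trace form τ := Tr ∘ μ : A ⊗ A → 1. Then the following are equivalent: (1) A is separable, i.e. there exists a morphism s : A → A ⊗ A with μ ∘ s = id_A which is a morphism of A-bimodules, meaning (id_A ⊗ μ) ∘ (s ⊗ id_A) = s ∘ μ = (μ ⊗ id_A) ∘ (id_A ⊗ s); (2) there exists a morphism α : 1 → A ⊗ A such that (id_A ⊗ τ) ∘ (α ⊗ id_A) = id_A; (3) A is special Frobenius, i.e. the morphism (τ ⊗ id_{A^∨}) ∘ (id_A ⊗ coev_A) : A → A^∨ is an isomorphism. An algebra satisfying these equivalent conditions is called étale. -/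
open CategoryTheory CategoryTheory.Limits CategoryTheory.MonoidalCategory

universe w v u

section

variable {C : Type u} [Category.{v} C] [MonoidalCategory C] [BraidedCategory C]
  [RightRigidCategory C]

/-- The trace morphism `Tr : A ⟶ 𝟙` of an algebra `(A, μ)`:
`A ⟶ A ⊗ A ⊗ A^∨ ⟶ A ⊗ A^∨ ⟶ 𝟙` using multiplication, duality and the braiding. -/
noncomputable def algTrace (A : C) (μ : A ⊗ A ⟶ A) : A ⟶ 𝟙_ C :=
  (ρ_ A).inv ≫ (A ◁ η_ A (Aᘁ)) ≫ (α_ A A (Aᘁ)).inv ≫ (μ ▷ (Aᘁ)) ≫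
    (β_ A (Aᘁ)).hom ≫ ε_ A (Aᘁ)

/-- The trace form `τ := Tr ∘ μ : A ⊗ A ⟶ 𝟙`. -/
noncomputable def traceForm (A : C) (μ : A ⊗ A ⟶ A) : A ⊗ A ⟶ 𝟙_ C :=
  μ ≫ algTrace A μ

/-- The morphism `(τ ⊗ id_{A^∨}) ∘ (id_A ⊗ coev_A) : A ⟶ A^∨`. -/
noncomputable def etaleComparison (A : C) (μ : A ⊗ A ⟶ A) : A ⟶ (Aᘁ) :=
  (ρ_ A).inv ≫ (A ◁ η_ A (Aᘁ)) ≫ (α_ A A (Aᘁ)).inv ≫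
    (traceForm A μ ▷ (Aᘁ)) ≫ (λ_ (Aᘁ)).hom

end

/-!
Write `a = a¹ ⊗ a²` for `a : 𝟙 ⟶ A ⊗ A` and `Σᵢ eᵢ ⊗ eᵢ*` for the coevaluation, so that
`Tr y = Σᵢ eᵢ*(y eᵢ)`. The trace form `τ` is symmetric and invariant, `τ(xy ⊗ z) = τ(x ⊗ yz)`.

(2) ⇔ (3): a copairing `a` for `τ` (`a¹ τ(a² ⊗ x) = x`) makes `τ♭ : A ⟶ A^∨` split epi, and,
`τ` being symmetric, split mono; conversely `(τ♭)⁻¹` carries the coevaluation to a copairing.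

(1) ⇔ (2): bimodule sections of `μ` correspond to separability idempotents (`a¹a² = 1` and
`x a¹ ⊗ a² = a¹ ⊗ a² x`) via `s ↦ s 1` and `a ↦ (x ↦ x a¹ ⊗ a²)`. For central `a`,
`a¹ Tr(a²) = Σᵢ a¹ eᵢ*(a² eᵢ) = Σᵢ eᵢ a¹ eᵢ*(a²) = a² a¹ = a¹ a²`, hence
`a¹ τ(a² ⊗ x) = x a¹ Tr(a²) = x a¹a²`; so a separability idempotent is a copairing. Conversely, by
invariance both `x ↦ x a¹ ⊗ a²` and `x ↦ a¹ ⊗ a² x` contract against a copairing `τ` to `μ`, and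
contraction against the nondegenerate `τ` is injective, so a copairing is central; the identity
above at `x = 1` then gives `a¹a² = 1`.
-/

section Contraction

variable {C : Type u} [Category.{v} C] [MonoidalCategory C]

/-- `x ⊗ y ↦ f(x)¹ τ(f(x)² ⊗ y)` -/
def pairingContract {A B B' X : C} (τ : B ⊗ B' ⟶ 𝟙_ C) (f : X ⟶ A ⊗ B) : X ⊗ B' ⟶ A :=
  f ▷ B' ≫ (α_ A B B').hom ≫ A ◁ τ ≫ (ρ_ A).hom

def IsCopairing {A : C} (τ : A ⊗ A ⟶ 𝟙_ C) (a : 𝟙_ C ⟶ A ⊗ A) : Prop :=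
  (λ_ A).inv ≫ pairingContract τ a = 𝟙 A

variable {A B B' X : C}

theorem pairingContract_comp_whiskerLeft {B₁ : C} (τ : B₁ ⊗ B' ⟶ 𝟙_ C) (f : X ⟶ A ⊗ B)
    (g : B ⟶ B₁) : pairingContract τ (f ≫ A ◁ g) = pairingContract (g ▷ B' ≫ τ) f := by
  simp [pairingContract]

theorem whiskerLeft_comp_pairingContract {B₁ : C} (τ : B ⊗ B' ⟶ 𝟙_ C) (f : X ⟶ A ⊗ B)
    (g : B₁ ⟶ B') : X ◁ g ≫ pairingContract τ f = pairingContract (B ◁ g ≫ τ) f := by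
  simp [pairingContract, whisker_exchange_assoc]

end Contraction

section Dual

variable {C : Type u} [Category.{v} C] [MonoidalCategory C] {A X : C} [HasRightDual A]
  (τ : A ⊗ A ⟶ 𝟙_ C)

/-- `etaleComparison A μ` is `pairingToDual (traceForm A μ)` by definition. -/
noncomputable def pairingToDual : A ⟶ Aᘁ :=
  (ρ_ A).inv ≫ A ◁ η_ A Aᘁ ≫ (α_ A A Aᘁ).inv ≫ τ ▷ Aᘁ ≫ (λ_ Aᘁ).hom

theorem pairingToDual_whiskerRight_comp_evaluation : pairingToDual τ ▷ A ≫ ε_ A Aᘁ = τ := by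
  apply (tensorRightHomEquiv A A Aᘁ (𝟙_ C)).injective
  rw [tensorRightHomEquiv_whiskerRight_comp_evaluation]
  simp [tensorRightHomEquiv, pairingToDual]

theorem pairingContract_eq_tensorRightHomEquiv_symm (f : X ⟶ A ⊗ A) :
    pairingContract τ f = (tensorRightHomEquiv X A Aᘁ A).symm (f ≫ A ◁ pairingToDual τ) :=
  calc pairingContract τ f = pairingContract (pairingToDual τ ▷ A ≫ ε_ A Aᘁ) f := by
        rw [pairingToDual_whiskerRight_comp_evaluation]
    _ = pairingContract (ε_ A Aᘁ) (f ≫ A ◁ pairingToDual τ) :=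
        (pairingContract_comp_whiskerLeft _ _ _).symm

theorem pairingContract_injective [IsIso (pairingToDual τ)] :
    Function.Injective (pairingContract τ : (X ⟶ A ⊗ A) → (X ⊗ A ⟶ A)) := by
  intro f g h
  rw [pairingContract_eq_tensorRightHomEquiv_symm, pairingContract_eq_tensorRightHomEquiv_symm]
    at h
  exact (cancel_mono (A ◁ pairingToDual τ)).1 ((tensorRightHomEquiv X A Aᘁ A).symm.injective h)

theorem isCopairing_iff_comp_whiskerLeft_pairingToDual (a : 𝟙_ C ⟶ A ⊗ A) :
    IsCopairing τ a ↔ a ≫ A ◁ pairingToDual τ = η_ A Aᘁ := by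
  have hcoev : (tensorRightHomEquiv (𝟙_ C) A Aᘁ A).symm (η_ A Aᘁ) = (λ_ A).hom := by
    simpa using tensorRightHomEquiv_symm_coevaluation_comp_whiskerRight (Y' := Aᘁ) (𝟙 A)
  rw [IsCopairing, Iso.inv_comp_eq, Category.comp_id, pairingContract_eq_tensorRightHomEquiv_symm,
    ← hcoev, Equiv.apply_eq_iff_eq]

theorem isSplitEpi_pairingToDual {a : 𝟙_ C ⟶ A ⊗ A} (ha : IsCopairing τ a) :
    IsSplitEpi (pairingToDual τ) := by
  refine IsSplitEpi.mk' ⟨(ρ_ Aᘁ).inv ≫ (tensorLeftHomEquiv _ _ _ _).symm a, ?_⟩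
  have hnat : (tensorLeftHomEquiv (𝟙_ C) A Aᘁ A).symm a ≫ pairingToDual τ =
      (tensorLeftHomEquiv (𝟙_ C) A Aᘁ Aᘁ).symm (a ≫ A ◁ pairingToDual τ) := by
    rw [Equiv.eq_symm_apply, tensorLeftHomEquiv_naturality, Equiv.apply_symm_apply]
  have hcoev : (tensorLeftHomEquiv (𝟙_ C) A Aᘁ Aᘁ).symm (η_ A Aᘁ) = (ρ_ Aᘁ).hom := by
    simpa using tensorLeftHomEquiv_symm_coevaluation_comp_whiskerLeft (Y := A) (𝟙 Aᘁ)
  rw [Category.assoc, hnat, (isCopairing_iff_comp_whiskerLeft_pairingToDual τ a).1 ha, hcoev,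
    Iso.inv_hom_id]

theorem isSplitMono_pairingToDual [BraidedCategory C] (hτ : (β_ A A).hom ≫ τ = τ)
    {a : 𝟙_ C ⟶ A ⊗ A} (ha : IsCopairing τ a) : IsSplitMono (pairingToDual τ) := by
  refine IsSplitMono.mk' ⟨(λ_ Aᘁ).inv ≫ pairingContract ((β_ A Aᘁ).hom ≫ ε_ A Aᘁ) a, ?_⟩
  rw [leftUnitor_inv_naturality_assoc, whiskerLeft_comp_pairingContract,
    BraidedCategory.braiding_naturality_right_assoc, pairingToDual_whiskerRight_comp_evaluation, hτ]
  exact ha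

theorem exists_isCopairing_iff_isIso_pairingToDual [BraidedCategory C]
    (hτ : (β_ A A).hom ≫ τ = τ) : (∃ a, IsCopairing τ a) ↔ IsIso (pairingToDual τ) := by
  constructor
  · rintro ⟨a, ha⟩
    have := isSplitEpi_pairingToDual τ ha
    have := isSplitMono_pairingToDual τ hτ ha
    exact isIso_of_epi_of_isSplitMono _
  · intro _
    refine ⟨η_ A Aᘁ ≫ A ◁ inv (pairingToDual τ), ?_⟩
    rw [isCopairing_iff_comp_whiskerLeft_pairingToDual]
    simp

end Dual

/-- With `η_ A A' = Σᵢ eᵢ ⊗ eᵢ*`, this reads `Σᵢ eᵢ ⊗ w¹ eᵢ*(w²) = w² ⊗ w¹`. -/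
theorem coevaluation_comp_whiskerLeft_pairingContract_braiding {C : Type u} [Category.{v} C]
    [MonoidalCategory C] [SymmetricCategory C] {A A' B : C} [ExactPairing A A']
    (w : 𝟙_ C ⟶ B ⊗ A) :
    η_ A A' ≫ A ◁ ((λ_ A').inv ≫ pairingContract ((β_ A A').hom ≫ ε_ A A') w) =
      w ≫ (β_ B A).hom := by
  apply (tensorLeftHomEquiv (𝟙_ C) A A' B).symm.injective
  rw [tensorLeftHomEquiv_symm_coevaluation_comp_whiskerLeft]
  simp only [tensorLeftHomEquiv, Equiv.coe_fn_symm_mk, pairingContract]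
  symm
  rw [MonoidalCategory.whiskerLeft_comp]
  conv_rhs => rw [MonoidalCategory.whiskerLeft_comp,
    show (β_ A A').hom = (β_ A' A).inv from SymmetricCategory.braiding_swap_eq_inv_braiding _ _]
  slice_rhs 1 2 => rw [← braiding_tensorUnit_right]
  slice_rhs 1 2 => rw [← BraidedCategory.braiding_naturality_right]
  rw [BraidedCategory.braiding_tensor_right_hom]
  simp only [Category.assoc, Iso.inv_hom_id_assoc,
    ← MonoidalCategory.whiskerLeft_comp_assoc, Iso.hom_inv_id,
    MonoidalCategory.whiskerLeft_id, Category.id_comp]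
  have hl : (ε_ A A' ▷ B) ≫ (λ_ B).hom = (ε_ A A' ▷ B) ≫ (β_ (𝟙_ C) B).hom ≫ (ρ_ B).hom := by
    simp
  rw [hl, BraidedCategory.braiding_naturality_left_assoc,
    BraidedCategory.braiding_tensor_left_hom]
  simp only [Category.assoc, Iso.inv_hom_id_assoc,
    ← MonoidalCategory.whiskerLeft_comp_assoc, SymmetricCategory.symmetry, Category.comp_id]


section Separable

open scoped MonObj

variable {C : Type u} [Category.{v} C] [MonoidalCategory C] {A B : C} [MonObj A]

/-- `x ↦ x a¹ ⊗ a²` -/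
def tensorLeftAct (a : 𝟙_ C ⟶ A ⊗ B) : A ⟶ A ⊗ B :=
  (ρ_ A).inv ≫ A ◁ a ≫ (α_ A A B).inv ≫ μ ▷ B

/-- `x ↦ a¹ ⊗ a² x` -/
def tensorRightAct (a : 𝟙_ C ⟶ B ⊗ A) : A ⟶ B ⊗ A :=
  (λ_ A).inv ≫ a ▷ A ≫ (α_ B A A).hom ≫ B ◁ μ

variable (A) in
def IsBimodSection (s : A ⟶ A ⊗ A) : Prop :=
  s ≫ μ = 𝟙 A ∧ s ▷ A ≫ (α_ A A A).hom ≫ A ◁ μ = μ ≫ s ∧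
    A ◁ s ≫ (α_ A A A).inv ≫ μ ▷ A = μ ≫ s

def IsSeparabilityIdempotent (a : 𝟙_ C ⟶ A ⊗ A) : Prop :=
  a ≫ μ = η ∧ tensorLeftAct a = tensorRightAct a

theorem one_comp_rightUnitor_inv_whiskerLeft_mul (b : 𝟙_ C ⟶ A) :
    η ≫ (ρ_ A).inv ≫ A ◁ b ≫ μ = b := by
  rw [rightUnitor_inv_naturality_assoc, ← whisker_exchange_assoc, MonObj.one_mul]
  simp [← unitors_inv_equal]

theorem tensorLeftAct_comp_mul (a : 𝟙_ C ⟶ A ⊗ A) :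
    tensorLeftAct a ≫ μ = (ρ_ A).inv ≫ A ◁ (a ≫ μ) ≫ μ := by
  simp [tensorLeftAct, MonObj.mul_assoc]

theorem tensorLeftAct_comp_whiskerLeft_rightUnitor (a : 𝟙_ C ⟶ A ⊗ B) (t : B ⟶ 𝟙_ C) :
    tensorLeftAct a ≫ A ◁ t ≫ (ρ_ A).hom = (ρ_ A).inv ≫ A ◁ (a ≫ A ◁ t ≫ (ρ_ A).hom) ≫ μ := by
  simp only [tensorLeftAct, Category.assoc]
  rw [← whisker_exchange_assoc]
  monoidal

theorem whiskerLeft_tensorLeftAct (a : 𝟙_ C ⟶ A ⊗ B) :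
    A ◁ tensorLeftAct a ≫ (α_ A A B).inv ≫ μ ▷ B = μ ≫ tensorLeftAct a :=
  calc A ◁ tensorLeftAct a ≫ (α_ A A B).inv ≫ μ ▷ B
      = 𝟙 _ ⊗≫ (A ⊗ A) ◁ a ⊗≫ ((α_ A A A).hom ≫ A ◁ μ[A] ≫ μ) ▷ B ⊗≫ 𝟙 _ := by
        simp only [tensorLeftAct]; monoidal
    _ = 𝟙 _ ⊗≫ ((A ⊗ A) ◁ a ≫ μ[A] ▷ (A ⊗ B)) ⊗≫ μ[A] ▷ B ⊗≫ 𝟙 _ := by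
        rw [← MonObj.mul_assoc A]; monoidal
    _ = μ ≫ tensorLeftAct a := by
        rw [whisker_exchange]; simp only [tensorLeftAct]; monoidal

theorem tensorLeftAct_whiskerRight (a : 𝟙_ C ⟶ A ⊗ A) :
    tensorLeftAct a ▷ A ≫ (α_ A A A).hom ≫ A ◁ μ =
      A ◁ tensorRightAct a ≫ (α_ A A A).inv ≫ μ ▷ A :=
  calc tensorLeftAct a ▷ A ≫ (α_ A A A).hom ≫ A ◁ μ
      = 𝟙 _ ⊗≫ (A ◁ a) ▷ A ⊗≫ (μ ▷ (A ⊗ A) ≫ A ◁ μ) ⊗≫ 𝟙 _ := by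
        simp only [tensorLeftAct]; monoidal
    _ = A ◁ tensorRightAct a ≫ (α_ A A A).inv ≫ μ ▷ A := by
        rw [← whisker_exchange]; simp only [tensorRightAct]; monoidal

theorem tensorRightAct_one_comp {s : A ⟶ A ⊗ A} (hs : IsBimodSection A s) :
    tensorRightAct (η ≫ s) = s := by
  rw [tensorRightAct, comp_whiskerRight, Category.assoc, hs.2.1,
    MonObj.one_mul_assoc, Iso.inv_hom_id_assoc]

theorem tensorLeftAct_one_comp {s : A ⟶ A ⊗ A} (hs : IsBimodSection A s) :
    tensorLeftAct (η ≫ s) = s := by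
  rw [tensorLeftAct, MonoidalCategory.whiskerLeft_comp, Category.assoc, hs.2.2,
    MonObj.mul_one_assoc, Iso.inv_hom_id_assoc]

theorem isBimodSection_tensorLeftAct {a : 𝟙_ C ⟶ A ⊗ A} (ha : IsSeparabilityIdempotent a) :
    IsBimodSection A (tensorLeftAct a) := by
  refine ⟨?_, ?_, whiskerLeft_tensorLeftAct a⟩
  · rw [tensorLeftAct_comp_mul, ha.1, MonObj.mul_one, Iso.inv_hom_id]
  · rw [tensorLeftAct_whiskerRight, ← ha.2, whiskerLeft_tensorLeftAct]

theorem isSeparabilityIdempotent_one_comp {s : A ⟶ A ⊗ A} (hs : IsBimodSection A s) :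
    IsSeparabilityIdempotent (η ≫ s) :=
  ⟨by rw [Category.assoc, hs.1, Category.comp_id],
    by rw [tensorLeftAct_one_comp hs, tensorRightAct_one_comp hs]⟩

theorem exists_isBimodSection_iff :
    (∃ s, IsBimodSection A s) ↔ ∃ a : 𝟙_ C ⟶ A ⊗ A, IsSeparabilityIdempotent a :=
  ⟨fun ⟨_, hs⟩ => ⟨_, isSeparabilityIdempotent_one_comp hs⟩,
    fun ⟨_, ha⟩ => ⟨_, isBimodSection_tensorLeftAct ha⟩⟩

theorem pairingContract_tensorLeftAct {B' : C} (τ : B ⊗ B' ⟶ 𝟙_ C) (a : 𝟙_ C ⟶ A ⊗ B) :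
    pairingContract τ (tensorLeftAct a) = A ◁ ((λ_ B').inv ≫ pairingContract τ a) ≫ μ :=
  calc pairingContract τ (tensorLeftAct a)
      = 𝟙 _ ⊗≫ (A ◁ a) ▷ B' ⊗≫ (μ ▷ (B ⊗ B') ≫ A ◁ τ) ⊗≫ 𝟙 _ := by
        simp only [pairingContract, tensorLeftAct]; monoidal
    _ = A ◁ ((λ_ B').inv ≫ pairingContract τ a) ≫ μ := by
        rw [← whisker_exchange]; simp only [pairingContract]; monoidal

theorem pairingContract_tensorRightAct (τ : A ⊗ A ⟶ 𝟙_ C)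
    (hτ : μ ▷ A ≫ τ = (α_ A A A).hom ≫ A ◁ μ ≫ τ) (a : 𝟙_ C ⟶ A ⊗ A) :
    pairingContract τ (tensorRightAct a) = μ ≫ (λ_ A).inv ≫ pairingContract τ a :=
  calc pairingContract τ (tensorRightAct a)
      = 𝟙 _ ⊗≫ a ▷ (A ⊗ A) ⊗≫ A ◁ (μ ▷ A ≫ τ) ⊗≫ 𝟙 _ := by
        simp only [pairingContract, tensorRightAct]; monoidal
    _ = 𝟙 _ ⊗≫ (a ▷ (A ⊗ A) ≫ (A ⊗ A) ◁ μ) ⊗≫ A ◁ τ ⊗≫ 𝟙 _ := by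
        rw [hτ]; monoidal
    _ = μ ≫ (λ_ A).inv ≫ pairingContract τ a := by
        rw [← whisker_exchange]; simp only [pairingContract]; monoidal

theorem tensorLeftAct_eq_tensorRightAct_of_isCopairing [HasRightDual A] (τ : A ⊗ A ⟶ 𝟙_ C)
    (hτ : μ ▷ A ≫ τ = (α_ A A A).hom ≫ A ◁ μ ≫ τ) [IsIso (pairingToDual τ)]
    {a : 𝟙_ C ⟶ A ⊗ A} (ha : IsCopairing τ a) : tensorLeftAct a = tensorRightAct a := by
  apply pairingContract_injective τ
  rw [pairingContract_tensorLeftAct, pairingContract_tensorRightAct τ hτ, ha]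
  simp

end Separable
section Trace

open scoped MonObj

variable {C : Type u} [Category.{v} C] [MonoidalCategory C] [SymmetricCategory C]
  [RightRigidCategory C] (A : C) [MonObj A]

theorem whiskerRight_mul_comp_traceForm :
    μ ▷ A ≫ traceForm A μ = (α_ A A A).hom ≫ A ◁ μ ≫ traceForm A μ := by
  simp only [traceForm, MonObj.mul_assoc_assoc]

theorem isCopairing_traceForm_iff (a : 𝟙_ C ⟶ A ⊗ A) :
    IsCopairing (traceForm A μ) a ↔ tensorRightAct a ≫ A ◁ algTrace A μ ≫ (ρ_ A).hom = 𝟙 A := by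
  simp only [IsCopairing, pairingContract, tensorRightAct, traceForm,
    MonoidalCategory.whiskerLeft_comp, Category.assoc]

theorem comp_whiskerLeft_algTrace (a : 𝟙_ C ⟶ A ⊗ A) :
    a ≫ A ◁ algTrace A μ ≫ (ρ_ A).hom =
      η_ A Aᘁ ≫ pairingContract ((β_ A Aᘁ).hom ≫ ε_ A Aᘁ) (tensorRightAct a) :=
  calc a ≫ A ◁ algTrace A μ ≫ (ρ_ A).hom
      = 𝟙 _ ⊗≫ (a ▷ 𝟙_ C ≫ (A ⊗ A) ◁ η_ A Aᘁ) ⊗≫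
          A ◁ (μ[A] ▷ Aᘁ ≫ (β_ A Aᘁ).hom ≫ ε_ A Aᘁ) ⊗≫ 𝟙 _ := by
        simp only [algTrace]; monoidal
    _ = _ := by
        rw [← whisker_exchange]; simp only [pairingContract, tensorRightAct]; monoidal

variable [IsCommMonObj A]

theorem traceForm_braiding : (β_ A A).hom ≫ traceForm A μ = traceForm A μ := by
  rw [traceForm, IsCommMonObj.mul_comm_assoc]

theorem comp_whiskerLeft_algTrace_of_tensorLeftAct_eq {a : 𝟙_ C ⟶ A ⊗ A}
    (ha : tensorLeftAct a = tensorRightAct a) : a ≫ A ◁ algTrace A μ ≫ (ρ_ A).hom = a ≫ μ :=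
  calc a ≫ A ◁ algTrace A μ ≫ (ρ_ A).hom
      = η_ A Aᘁ ≫ pairingContract ((β_ A Aᘁ).hom ≫ ε_ A Aᘁ) (tensorLeftAct a) := by
        rw [comp_whiskerLeft_algTrace, ha]
    _ = a ≫ (β_ A A).hom ≫ μ := by
        rw [pairingContract_tensorLeftAct, ← Category.assoc,
          coevaluation_comp_whiskerLeft_pairingContract_braiding, Category.assoc]
    _ = a ≫ μ := by rw [IsCommMonObj.mul_comm]

theorem isCopairing_traceForm_of_isSeparabilityIdempotent {a : 𝟙_ C ⟶ A ⊗ A}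
    (ha : IsSeparabilityIdempotent a) : IsCopairing (traceForm A μ) a := by
  rw [isCopairing_traceForm_iff, ← ha.2, tensorLeftAct_comp_whiskerLeft_rightUnitor,
    comp_whiskerLeft_algTrace_of_tensorLeftAct_eq A ha.2, ha.1, MonObj.mul_one, Iso.inv_hom_id]

theorem isSeparabilityIdempotent_of_isCopairing_traceForm {a : 𝟙_ C ⟶ A ⊗ A}
    (ha : IsCopairing (traceForm A μ) a) : IsSeparabilityIdempotent a := by
  have : IsIso (pairingToDual (traceForm A μ)) :=
    (exists_isCopairing_iff_isIso_pairingToDual _ (traceForm_braiding A)).1 ⟨a, ha⟩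
  have hcentral := tensorLeftAct_eq_tensorRightAct_of_isCopairing _
    (whiskerRight_mul_comp_traceForm A) ha
  have hunit := (isCopairing_traceForm_iff A a).1 ha
  rw [← hcentral, tensorLeftAct_comp_whiskerLeft_rightUnitor,
    comp_whiskerLeft_algTrace_of_tensorLeftAct_eq A hcentral] at hunit
  refine ⟨?_, hcentral⟩
  simpa only [one_comp_rightUnitor_inv_whiskerLeft_mul, Category.comp_id] using η ≫= hunit

end Trace

theorem etale_tfae_general
    {C : Type u} [Category.{v} C]
    [MonoidalCategory C] [SymmetricCategory C]
    [RigidCategory C]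
    (A : C) (μ : A ⊗ A ⟶ A) (η : 𝟙_ C ⟶ A)
    (hassoc : (α_ A A A).hom ≫ (A ◁ μ) ≫ μ = (μ ▷ A) ≫ μ)
    (hone : (η ▷ A) ≫ μ = (λ_ A).hom)
    (hone' : (A ◁ η) ≫ μ = (ρ_ A).hom)
    (hcomm : (β_ A A).hom ≫ μ = μ) :
    ((∃ s : A ⟶ A ⊗ A, s ≫ μ = 𝟙 A ∧
        (s ▷ A) ≫ (α_ A A A).hom ≫ (A ◁ μ) = μ ≫ s ∧
        (A ◁ s) ≫ (α_ A A A).inv ≫ (μ ▷ A) = μ ≫ s) ↔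
      (∃ a : 𝟙_ C ⟶ A ⊗ A,
        (λ_ A).inv ≫ (a ▷ A) ≫ (α_ A A A).hom ≫ (A ◁ traceForm A μ) ≫ (ρ_ A).hom = 𝟙 A)) ∧
    ((∃ a : 𝟙_ C ⟶ A ⊗ A,
        (λ_ A).inv ≫ (a ▷ A) ≫ (α_ A A A).hom ≫ (A ◁ traceForm A μ) ≫ (ρ_ A).hom = 𝟙 A) ↔
      IsIso (etaleComparison A μ)) := by
  let _ : MonObj A := ⟨η, μ, hone, hone', hassoc.symm⟩
  have : IsCommMonObj A := ⟨hcomm⟩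
  refine ⟨exists_isBimodSection_iff.trans (exists_congr fun a => ?_), ?_⟩
  · exact ⟨isCopairing_traceForm_of_isSeparabilityIdempotent A,
      isSeparabilityIdempotent_of_isCopairing_traceForm A⟩
  · exact exists_isCopairing_iff_isIso_pairingToDual _ (traceForm_braiding A)

/-- For a commutative algebra `(A, μ, η)` in a pretannakian category `C` over `k`, the
following are equivalent: (1) `A` is separable (`μ` admits an `A`-bimodule section);
(2) there is `α : 𝟙 ⟶ A ⊗ A` with `(id_A ⊗ τ) ∘ (α ⊗ id_A) = id_A`, where `τ` is the trace
form; (3) `A` is special Frobenius, i.e. `(τ ⊗ id_{A^∨}) ∘ (id_A ⊗ coev_A) : A ⟶ A^∨` is an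
isomorphism. -/
theorem etale_tfae
    {k : Type*} [Field k]
    {C : Type u} [Category.{v} C] [Abelian C] [Linear k C]
    [MonoidalCategory C] [SymmetricCategory C] [MonoidalPreadditive C] [MonoidalLinear k C]
    [RigidCategory C] [EssentiallySmall.{w} C]
    (hCunit : Function.Bijective fun a : k => a • (𝟙 (𝟙_ C)))
    (hClen : ∀ X : C, IsNoetherianObject X ∧ IsArtinianObject X)
    (A : C) (μ : A ⊗ A ⟶ A) (η : 𝟙_ C ⟶ A)
    (hassoc : (α_ A A A).hom ≫ (A ◁ μ) ≫ μ = (μ ▷ A) ≫ μ)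
    (hone : (η ▷ A) ≫ μ = (λ_ A).hom)
    (hone' : (A ◁ η) ≫ μ = (ρ_ A).hom)
    (hcomm : (β_ A A).hom ≫ μ = μ) :
    ((∃ s : A ⟶ A ⊗ A, s ≫ μ = 𝟙 A ∧
        (s ▷ A) ≫ (α_ A A A).hom ≫ (A ◁ μ) = μ ≫ s ∧
        (A ◁ s) ≫ (α_ A A A).inv ≫ (μ ▷ A) = μ ≫ s) ↔
      (∃ a : 𝟙_ C ⟶ A ⊗ A,
        (λ_ A).inv ≫ (a ▷ A) ≫ (α_ A A A).hom ≫ (A ◁ traceForm A μ) ≫ (ρ_ A).hom = 𝟙 A)) ∧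
    ((∃ a : 𝟙_ C ⟶ A ⊗ A,
        (λ_ A).inv ≫ (a ▷ A) ≫ (α_ A A A).hom ≫ (A ◁ traceForm A μ) ≫ (ρ_ A).hom = 𝟙 A) ↔
      IsIso (etaleComparison A μ)) :=
  etale_tfae_general A μ η hassoc hone hone' hcomm
end

section
/- Let F : C → D be an exact functor between abelian categories admitting a right adjoint F_*. Assume: C and D have enough projectives; F sends projective objects to projective objects; every projective object of D is injective; and every object of D is a subquotient of F(X) for some object X of C. Then F_* is exact and faithful. -/
/-!
A projective object of `D` is injective, so it is a retract of any object it is a subquotient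
of: the quotient map onto it splits, and so does the resulting monomorphism out of it. Hence
every projective of `D`, and therefore every object of `D`, is a quotient of some `F(X)`, which
makes the counit of `F ⊣ G` epi and `G` faithful. Since `F` preserves projectives and `C` has
enough of them, `G` preserves epimorphisms; being a right adjoint it is left exact, hence exact.
-/

open CategoryTheory CategoryTheory.Limits

universe v₁ u₁ v₂ u₂

theorem IsSubquotient.nonempty_retract {C : Type u₁} [Category.{v₁} C] {W Z : C}
    (h : IsSubquotient W Z) [Projective W] [Injective W] : Nonempty (Retract W Z) := by
  obtain ⟨S, i, p, hi, hp⟩ := h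
  let s : W ⟶ S := Projective.factorThru (𝟙 W) p
  have hs : s ≫ p = 𝟙 W := Projective.factorThru_comp (𝟙 W) p
  have : Mono s := mono_of_mono_fac hs
  exact ⟨⟨s ≫ i, Injective.factorThru (𝟙 W) (s ≫ i), Injective.comp_factorThru _ _⟩⟩

theorem exists_epi_of_isSubquotient_obj {C : Type u₁} [Category.{v₁} C]
    {D : Type u₂} [Category.{v₂} D] [EnoughProjectives D] (F : C ⥤ D)
    (hinj : ∀ P : D, Projective P → Injective P)
    (hsurj : ∀ Z : D, ∃ X : C, IsSubquotient Z (F.obj X)) (Z : D) :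
    ∃ (X : C) (q : F.obj X ⟶ Z), Epi q := by
  obtain ⟨X, hX⟩ := hsurj (Projective.over Z)
  have := hinj (Projective.over Z) inferInstance
  obtain ⟨r⟩ := hX.nonempty_retract
  exact ⟨X, r.r ≫ Projective.π Z, epi_comp _ _⟩

namespace CategoryTheory

theorem Adjunction.epi_counit_app_of_epi {C : Type u₁} [Category.{v₁} C]
    {D : Type u₂} [Category.{v₂} D] {F : C ⥤ D} {G : D ⥤ C} (adj : F ⊣ G)
    {X : C} {Z : D} (q : F.obj X ⟶ Z) [Epi q] : Epi (adj.counit.app Z) := by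
  have hq : F.map (adj.homEquiv X Z q) ≫ adj.counit.app Z = q := by
    simp [Adjunction.homEquiv_unit]
  exact epi_of_epi_fac hq

theorem Functor.preservesFiniteColimits_of_preservesEpimorphisms {C : Type u₁}
    [Category.{v₁} C] [Abelian C] {D : Type u₂} [Category.{v₂} D] [Abelian D] (G : D ⥤ C)
    [PreservesFiniteLimits G] [G.PreservesEpimorphisms] : PreservesFiniteColimits G := by
  have := G.additive_of_preserves_binary_products
  have := G.preservesHomology_of_preservesEpis_and_kernels
  exact G.preservesFiniteColimits_of_preservesHomology

end CategoryTheory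

theorem rightAdjoint_exact_faithful_of_surjective_general
    {C : Type u₁} [Category.{v₁} C] [Abelian C]
    {D : Type u₂} [Category.{v₂} D] [Abelian D]
    (F : C ⥤ D)
    (G : D ⥤ C) (adj : F ⊣ G)
    [EnoughProjectives C] [EnoughProjectives D]
    (hproj : ∀ P : C, Projective P → Projective (F.obj P))
    (hinj : ∀ P : D, Projective P → Injective P)
    (hsurj : ∀ Z : D, ∃ X : C, IsSubquotient Z (F.obj X)) :
    G.Faithful ∧ Nonempty (PreservesFiniteLimits G) ∧ Nonempty (PreservesFiniteColimits G) := by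
  have : F.PreservesProjectiveObjects := ⟨hproj _⟩
  have := Functor.preservesEpimorphisms_of_adjunction_of_preservesProjectiveObjects adj
  have : ∀ Z, Epi (adj.counit.app Z) := fun Z => by
    obtain ⟨X, q, _⟩ := exists_epi_of_isSubquotient_obj F hinj hsurj Z
    exact adj.epi_counit_app_of_epi q
  have := adj.rightAdjoint_preservesLimits
  exact ⟨adj.faithful_R_of_epi_counit_app, ⟨inferInstance⟩,
    ⟨G.preservesFiniteColimits_of_preservesEpimorphisms⟩⟩

/-- Let `F : C ⥤ D` be an exact functor between abelian categories with a right adjoint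
`G`. Assume `C` and `D` have enough projectives, `F` preserves projective objects, every
projective object of `D` is injective, and every object of `D` is a subquotient of some
`F(X)`. Then the right adjoint `G` is exact and faithful. -/
theorem rightAdjoint_exact_faithful_of_surjective
    {C : Type u₁} [Category.{v₁} C] [Abelian C]
    {D : Type u₂} [Category.{v₂} D] [Abelian D]
    (F : C ⥤ D) [PreservesFiniteLimits F] [PreservesFiniteColimits F]
    (G : D ⥤ C) (adj : F ⊣ G)
    [EnoughProjectives C] [EnoughProjectives D]
    (hproj : ∀ P : C, Projective P → Projective (F.obj P))
    (hinj : ∀ P : D, Projective P → Injective P)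
    (hsurj : ∀ Z : D, ∃ X : C, IsSubquotient Z (F.obj X)) :
    G.Faithful ∧ Nonempty (PreservesFiniteLimits G) ∧ Nonempty (PreservesFiniteColimits G) :=
  rightAdjoint_exact_faithful_of_surjective_general F G adj hproj hinj hsurj
end
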